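/- arXiv:2402.17947 — 2 statements merged into one kernel-verified Lean document; each statement's English description precedes it below -/
import Mathlib

section
/- Let (λ_n) be a sequence in (0,∞), Λ ∈ ℕ with Λ ≥ 1, and N_Λ ∈ ℕ such that λ_n ≥ 1/Λ for all n ≥ N_Λ, and suppose γ₃ : ℕ → ℕ is a Cauchy modulus of the series Σ_{n=0}^∞ |λ_n − λ_{n+1}|. Then γ₁(k) = max{N_Λ, γ₃(Λ(k+1) − 1)} is a Cauchy modulus of the series Σ_{n=0}^∞ |1 − λ_{n+1}/λ_n|, and γ₁ is also a Cauchy modulus of the series Σ_{n=0}^∞ |1 − λ_n/λ_{n+1}|. -/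
/-!
Once `a ≥ 1/Λ`, `|1 - b/a| = |a - b| / a ≤ Λ |a - b|`. Hence beyond `N_Λ` the terms of both ratio
series are bounded by `Λ |λ_i - λ_{i+1}|`, and a tail of `Σ |λ_i - λ_{i+1}|` of size at most
`1/(Λ(k+1))`, which `γ₃` provides at index `Λ(k+1) - 1`, bounds their tails by `1/(k+1)`.
-/

open Finset

def IsCauchyModulus (b : ℕ → ℝ) (χ : ℕ → ℕ) : Prop :=
  ∀ k : ℕ, ∀ n, χ k ≤ n → ∀ p : ℕ, ∑ i ∈ Icc (n + 1) (n + p), b i ≤ 1 / (k + 1)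

namespace IsCauchyModulus

variable {b : ℕ → ℝ} {χ : ℕ → ℕ}

theorem const_mul (hχ : IsCauchyModulus b χ) {C : ℕ} (hC : 1 ≤ C) :
    IsCauchyModulus (fun i => C * b i) (fun k => χ (C * (k + 1) - 1)) := by
  intro k n hn p
  have hC' : (0 : ℝ) < C := by exact_mod_cast hC
  have hprec : ((C * (k + 1) - 1 : ℕ) : ℝ) + 1 = C * (k + 1) := by
    rw [Nat.cast_sub (by nlinarith)]
    push_cast
    ring
  calc ∑ i ∈ Icc (n + 1) (n + p), (C : ℝ) * b i
      = C * ∑ i ∈ Icc (n + 1) (n + p), b i := (mul_sum _ _ _).symm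
    _ ≤ C * (1 / (((C * (k + 1) - 1 : ℕ) : ℝ) + 1)) :=
        mul_le_mul_of_nonneg_left (hχ _ n hn p) hC'.le
    _ = 1 / (k + 1) := by
        rw [hprec]
        field_simp

theorem mono (hχ : IsCauchyModulus b χ) {f : ℕ → ℝ} {N : ℕ} (hf : ∀ i, N < i → f i ≤ b i) :
    IsCauchyModulus f (fun k => max N (χ k)) := by
  intro k n hn p
  calc ∑ i ∈ Icc (n + 1) (n + p), f i
      ≤ ∑ i ∈ Icc (n + 1) (n + p), b i := by
        refine sum_le_sum fun i hi => hf i ?_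
        have := (mem_Icc.mp hi).1
        have := le_of_max_le_left hn
        omega
    _ ≤ 1 / (k + 1) := hχ k n (le_of_max_le_right hn) p

end IsCauchyModulus

theorem abs_one_sub_div_le_mul_abs_sub {C a : ℝ} (b : ℝ) (hC : 0 < C) (ha : 1 / C ≤ a) :
    |1 - b / a| ≤ C * |a - b| := by
  have ha₀ : 0 < a := (one_div_pos.mpr hC).trans_le ha
  rw [one_sub_div ha₀.ne', abs_div, abs_of_pos ha₀, div_le_iff₀ ha₀, mul_comm C, mul_assoc]
  refine le_mul_of_one_le_right (abs_nonneg _) ?_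
  rwa [div_le_iff₀ hC, mul_comm] at ha

theorem stmt_9_general (lam : ℕ → ℝ)
    (Λ : ℕ) (hΛ : 1 ≤ Λ) (NΛ : ℕ)
    (hlow : ∀ n : ℕ, NΛ ≤ n → 1 / (Λ : ℝ) ≤ lam n)
    (γ₃ : ℕ → ℕ)
    (hγ₃ : ∀ k : ℕ, ∀ n, γ₃ k ≤ n → ∀ p : ℕ,
      ∑ i ∈ Finset.Icc (n + 1) (n + p), |lam i - lam (i + 1)| ≤ 1 / (k + 1)) :
    (∀ k : ℕ, ∀ n, max NΛ (γ₃ (Λ * (k + 1) - 1)) ≤ n → ∀ p : ℕ,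
      ∑ i ∈ Finset.Icc (n + 1) (n + p), |1 - lam (i + 1) / lam i| ≤ 1 / (k + 1)) ∧
    (∀ k : ℕ, ∀ n, max NΛ (γ₃ (Λ * (k + 1) - 1)) ≤ n → ∀ p : ℕ,
      ∑ i ∈ Finset.Icc (n + 1) (n + p), |1 - lam i / lam (i + 1)| ≤ 1 / (k + 1)) := by
  have hΛ₀ : (0 : ℝ) < Λ := by exact_mod_cast hΛ
  have hmod : IsCauchyModulus _ _ := IsCauchyModulus.const_mul hγ₃ hΛ
  constructor
  · exact hmod.mono fun i hi => abs_one_sub_div_le_mul_abs_sub _ hΛ₀ (hlow i hi.le)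
  · refine hmod.mono fun i hi => ?_
    rw [abs_sub_comm (lam i)]
    exact abs_one_sub_div_le_mul_abs_sub _ hΛ₀ (hlow (i + 1) (by omega))

/-- From a Cauchy modulus of `Σ |λ_n - λ_{n+1}|` and a uniform lower bound `1/Λ` on `λ_n`,
one gets Cauchy moduli of `Σ |1 - λ_{n+1}/λ_n|` and `Σ |1 - λ_n/λ_{n+1}|`. -/
theorem stmt_9 (lam : ℕ → ℝ) (hlam : ∀ n, 0 < lam n)
    (Λ : ℕ) (hΛ : 1 ≤ Λ) (NΛ : ℕ)
    (hlow : ∀ n : ℕ, NΛ ≤ n → 1 / (Λ : ℝ) ≤ lam n)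
    (γ₃ : ℕ → ℕ)
    (hγ₃ : ∀ k : ℕ, ∀ n, γ₃ k ≤ n → ∀ p : ℕ,
      ∑ i ∈ Finset.Icc (n + 1) (n + p), |lam i - lam (i + 1)| ≤ 1 / (k + 1)) :
    (∀ k : ℕ, ∀ n, max NΛ (γ₃ (Λ * (k + 1) - 1)) ≤ n → ∀ p : ℕ,
      ∑ i ∈ Finset.Icc (n + 1) (n + p), |1 - lam (i + 1) / lam i| ≤ 1 / (k + 1)) ∧
    (∀ k : ℕ, ∀ n, max NΛ (γ₃ (Λ * (k + 1) - 1)) ≤ n → ∀ p : ℕ,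
      ∑ i ∈ Finset.Icc (n + 1) (n + p), |1 - lam i / lam (i + 1)| ≤ 1 / (k + 1)) :=
  stmt_9_general lam Λ hΛ NΛ hlow γ₃ hγ₃
end

section
/- Let X be a real Banach space, A : X → Set X an accretive operator with zer A ≠ ∅, and for each γ > 0 let J_γ : X → X be a resolvent function of A. Let α ∈ [0,1), f : X → X an α-contraction, x ∈ X, (α_n) a sequence in [0,1], (λ_n) a sequence in (0,∞), (e_n) a sequence in X, and (x_n) the VAMe iteration. Assume Σ_{n=0}^∞ α_n = ∞, Σ_{n=0}^∞ |α_n − α_{n+1}| < ∞, Σ_{n=0}^∞ ‖e_n‖ < ∞, and at least one of the following holds: (a) Σ_{n=0}^∞ |1 − λ_{n+1}/λ_n| < ∞; (b) Σ_{n=0}^∞ |1 − λ_n/λ_{n+1}| < ∞; (c) inf_{n∈ℕ} λ_n > 0 and Σ_{n=0}^∞ |λ_n − λ_{n+1}| < ∞. Then lim_{n→∞} ‖x_n − x_{n+1}‖ = 0. -/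
/-!
The resolvents `J_γ` are nonexpansive and fix every zero `z` of `A`, so the iterates stay bounded.
Subtracting two consecutive steps gives
`‖x_{n+2} - x_{n+1}‖ ≤ (1 - (1 - α) α_{n+1}) ‖x_{n+1} - x_n‖ + c_n`, where `c_n` collects
`|α_n - α_{n+1}|`, `‖e_n‖`, `‖e_{n+1}‖` and `‖J_{λ_{n+1}} x_n - J_{λ_n} x_n‖`. The last term is
summable under each of the conditions (a)–(c) by the resolvent estimate
`‖J_γ u - J_μ u‖ ≤ |1 - μ / γ| ‖u - J_γ u‖`, and Xu's lemma (`s_{n+1} ≤ (1 - t_n) s_n + c_n` with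
`∑ t_n = ∞` and `∑ c_n < ∞` forces `s_n → 0`) concludes.
-/

open Filter Topology Finset

section RealSequences

variable {s t c : ℕ → ℝ}

lemma le_max_add_sum_of_le_one_sub_mul_add {r b d : ℕ → ℝ} {K : ℝ}
    (hb : ∀ n, b n ∈ Set.Icc (0 : ℝ) 1) (hd : ∀ n, 0 ≤ d n)
    (hrec : ∀ n, r (n + 1) ≤ (1 - b n) * r n + b n * K + d n) (n : ℕ) :
    r n ≤ max (r 0) K + ∑ i ∈ range n, d i := by
  induction n with
  | zero => simp
  | succ n ih =>
    have hK : K ≤ max (r 0) K + ∑ i ∈ range n, d i :=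
      le_add_of_le_of_nonneg (le_max_right _ _) (sum_nonneg fun i _ => hd i)
    obtain ⟨hb0, hb1⟩ := hb n
    rw [sum_range_succ]
    linarith [hrec n, mul_le_mul_of_nonneg_left ih (sub_nonneg.2 hb1),
      mul_le_mul_of_nonneg_left hK hb0]

lemma prod_one_sub_le_exp_neg_sum {ι : Type*} (S : Finset ι) {u : ι → ℝ}
    (hu : ∀ i ∈ S, u i ≤ 1) : ∏ i ∈ S, (1 - u i) ≤ Real.exp (-∑ i ∈ S, u i) := by
  rw [← sum_neg_distrib, Real.exp_sum]
  exact prod_le_prod (fun i hi => sub_nonneg.2 (hu i hi)) fun i _ => Real.one_sub_le_exp_neg (u i)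

lemma tendsto_sum_range_succ_atTop {u : ℕ → ℝ}
    (h : Tendsto (fun n => ∑ i ∈ range n, u i) atTop atTop) :
    Tendsto (fun n => ∑ i ∈ range n, u (i + 1)) atTop atTop := by
  refine (tendsto_atTop_add_const_right atTop (-u 0) (h.comp (tendsto_add_atTop_nat 1))).congr
    fun n => ?_
  simp [sum_range_succ']

lemma tendsto_prod_Ico_one_sub_atTop (ht1 : ∀ n, t n ≤ 1)
    (htd : Tendsto (fun n => ∑ i ∈ range n, t i) atTop atTop) (m : ℕ) :
    Tendsto (fun n => ∏ k ∈ Ico m n, (1 - t k)) atTop (𝓝 0) := by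
  have hsum : Tendsto (fun n => ∑ k ∈ Ico m n, t k) atTop atTop := by
    refine (tendsto_atTop_add_const_right atTop (-∑ k ∈ range m, t k) htd).congr' ?_
    filter_upwards [eventually_ge_atTop m] with n hn
    rw [sum_Ico_eq_sub _ hn, sub_eq_add_neg]
  refine squeeze_zero (fun n => prod_nonneg fun k _ => sub_nonneg.2 (ht1 k))
    (fun n => prod_one_sub_le_exp_neg_sum _ fun k _ => ht1 k) ?_
  exact Real.tendsto_exp_atBot.comp (tendsto_neg_atTop_atBot.comp hsum)

lemma le_prod_Ico_one_sub_mul_add_sum (ht0 : ∀ n, 0 ≤ t n) (ht1 : ∀ n, t n ≤ 1)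
    (hc0 : ∀ n, 0 ≤ c n) (hrec : ∀ n, s (n + 1) ≤ (1 - t n) * s n + c n) {m n : ℕ}
    (hmn : m ≤ n) : s n ≤ (∏ k ∈ Ico m n, (1 - t k)) * s m + ∑ k ∈ Ico m n, c k := by
  induction n, hmn using Nat.le_induction with
  | base => simp
  | succ n hmn ih =>
    rw [prod_Ico_succ_top hmn, sum_Ico_succ_top hmn]
    have hS : 0 ≤ ∑ k ∈ Ico m n, c k := sum_nonneg fun k _ => hc0 k
    linarith [hrec n, mul_le_mul_of_nonneg_left ih (sub_nonneg.2 (ht1 n)), mul_nonneg (ht0 n) hS]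

lemma tendsto_zero_of_le_one_sub_mul_add (hs0 : ∀ n, 0 ≤ s n) (ht0 : ∀ n, 0 ≤ t n)
    (ht1 : ∀ n, t n ≤ 1) (hc0 : ∀ n, 0 ≤ c n) (hc : Summable c)
    (htd : Tendsto (fun n => ∑ i ∈ range n, t i) atTop atTop)
    (hrec : ∀ n, s (n + 1) ≤ (1 - t n) * s n + c n) : Tendsto s atTop (𝓝 0) := by
  refine tendsto_order.2 ⟨fun ε hε => Eventually.of_forall fun n => hε.trans_le (hs0 n),
    fun ε hε => ?_⟩
  obtain ⟨m, hm⟩ := ((tendsto_sum_nat_add c).eventually (gt_mem_nhds (half_pos hε))).exists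
  have hprod : ∀ᶠ n in atTop, (∏ k ∈ Ico m n, (1 - t k)) * s m < ε / 2 := by
    have := (tendsto_prod_Ico_one_sub_atTop ht1 htd m).mul_const (s m)
    rw [zero_mul] at this
    exact this.eventually (gt_mem_nhds (half_pos hε))
  filter_upwards [hprod, eventually_ge_atTop m] with n hn hmn
  have htail : ∑ k ∈ Ico m n, c k ≤ ∑' k, c (k + m) := by
    rw [sum_Ico_eq_sum_range]
    simp_rw [add_comm m]
    exact Summable.sum_le_tsum _ (fun k _ => hc0 _) ((summable_nat_add_iff m).2 hc)
  linarith [le_prod_Ico_one_sub_mul_add_sum ht0 ht1 hc0 hrec hmn]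

end RealSequences

section Accretive

variable {X : Type*} [NormedAddCommGroup X] [NormedSpace ℝ X]

def IsAccretive (A : X → Set X) : Prop :=
  ∀ x y u v : X, u ∈ A x → v ∈ A y → ∀ γ : ℝ, 0 < γ → ‖x - y‖ ≤ ‖x - y + γ • (u - v)‖

def IsResolvent (A : X → Set X) (γ : ℝ) (J : X → X) : Prop :=
  ∀ x, γ⁻¹ • (x - J x) ∈ A (J x)

namespace IsAccretive

variable {A : X → Set X} {γ μ : ℝ} {J K : X → X}

lemma norm_resolvent_sub_le (hA : IsAccretive A) (hγ : 0 < γ) (hJ : IsResolvent A γ J)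
    (u v : X) : ‖J u - J v‖ ≤ ‖u - v‖ := by
  have h := hA _ _ _ _ (hJ u) (hJ v) γ hγ
  rwa [smul_sub, smul_inv_smul₀ hγ.ne', smul_inv_smul₀ hγ.ne',
    show J u - J v + (u - J u - (v - J v)) = u - v by abel] at h

lemma resolvent_eq_of_zero_mem (hA : IsAccretive A) (hγ : 0 < γ) (hJ : IsResolvent A γ J)
    {z : X} (hz : (0 : X) ∈ A z) : J z = z := by
  have h := hA _ _ _ _ (hJ z) hz γ hγ
  rw [sub_zero, smul_inv_smul₀ hγ.ne', sub_add_sub_cancel, sub_self, norm_zero] at h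
  exact sub_eq_zero.1 (norm_le_zero_iff.1 h)

lemma norm_sub_resolvent_le (hA : IsAccretive A) (hγ : 0 < γ) (hJ : IsResolvent A γ J)
    {z : X} (hz : (0 : X) ∈ A z) (u : X) : ‖u - J u‖ ≤ 2 * ‖u - z‖ := by
  calc ‖u - J u‖ ≤ ‖u - z‖ + ‖J z - J u‖ := by
        rw [hA.resolvent_eq_of_zero_mem hγ hJ hz]; exact norm_sub_le_norm_sub_add_norm_sub _ _ _
    _ ≤ 2 * ‖u - z‖ := by linarith [hA.norm_resolvent_sub_le hγ hJ z u, norm_sub_rev z u]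

lemma norm_resolvent_sub_resolvent_le (hA : IsAccretive A) (hμ : 0 < μ)
    (hJ : IsResolvent A γ J) (hK : IsResolvent A μ K) (u : X) :
    ‖J u - K u‖ ≤ |1 - μ / γ| * ‖u - J u‖ := by
  have h := hA _ _ _ _ (hJ u) (hK u) μ hμ
  rwa [show J u - K u + μ • (γ⁻¹ • (u - J u) - μ⁻¹ • (u - K u)) = (μ / γ - 1) • (u - J u) by
      rw [smul_sub, smul_smul, smul_inv_smul₀ hμ.ne', sub_smul, one_smul, div_eq_mul_inv]; abel,
    norm_smul, Real.norm_eq_abs, abs_sub_comm] at h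

end IsAccretive

lemma norm_convex_step_sub_le {α a b : ℝ} {f g h : X → X}
    (hf : ∀ x y, ‖f x - f y‖ ≤ α * ‖x - y‖) (hg : ∀ x y, ‖g x - g y‖ ≤ ‖x - y‖)
    (hb : b ∈ Set.Icc (0 : ℝ) 1) (u v d d' : X) :
    ‖(b • f u + (1 - b) • g u + d') - (a • f v + (1 - a) • h v + d)‖ ≤
      (1 - (1 - α) * b) * ‖u - v‖ + |a - b| * ‖f v - h v‖ + ‖g v - h v‖ + ‖d'‖ + ‖d‖ := by
  obtain ⟨hb0, hb1⟩ := hb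
  rw [show (b • f u + (1 - b) • g u + d') - (a • f v + (1 - a) • h v + d) =
      (b • (f u - f v) + (1 - b) • (g u - g v)) + (1 - b) • (g v - h v) +
        (b - a) • (f v - h v) + (d' - d) by module]
  have hcontr : ‖b • (f u - f v) + (1 - b) • (g u - g v)‖ ≤ (1 - (1 - α) * b) * ‖u - v‖ := by
    refine (norm_add_le _ _).trans ?_
    rw [norm_smul_of_nonneg hb0, norm_smul_of_nonneg (sub_nonneg.2 hb1)]
    linarith [mul_le_mul_of_nonneg_left (hf u v) hb0,
      mul_le_mul_of_nonneg_left (hg u v) (sub_nonneg.2 hb1)]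
  have hres : ‖(1 - b) • (g v - h v)‖ ≤ ‖g v - h v‖ := by
    rw [norm_smul_of_nonneg (sub_nonneg.2 hb1)]
    nlinarith [norm_nonneg (g v - h v)]
  have hcoef : ‖(b - a) • (f v - h v)‖ = |a - b| * ‖f v - h v‖ := by
    rw [norm_smul, Real.norm_eq_abs, abs_sub_comm]
  exact norm_add₄_le.trans (by linarith [norm_sub_le d' d])

section VAMe

variable {A : X → Set X} {Jr : ℝ → X → X} {α : ℝ} {f : X → X} {a lam : ℕ → ℝ} {e xs : ℕ → X}

lemma exists_forall_norm_sub_le_of_vame (hA : IsAccretive A)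
    (hJ : ∀ γ, 0 < γ → IsResolvent A γ (Jr γ)) {z : X} (hz : (0 : X) ∈ A z)
    (hα0 : 0 ≤ α) (hα1 : α < 1) (hf : ∀ x y, ‖f x - f y‖ ≤ α * ‖x - y‖)
    (ha : ∀ n, a n ∈ Set.Icc (0 : ℝ) 1) (hlam : ∀ n, 0 < lam n) (he : Summable fun n => ‖e n‖)
    (hxs : ∀ n, xs (n + 1) = a n • f (xs n) + (1 - a n) • Jr (lam n) (xs n) + e n) :
    ∃ B, ∀ n, ‖xs n - z‖ ≤ B := by
  set K := ‖f z - z‖ / (1 - α)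
  have hrec : ∀ n, ‖xs (n + 1) - z‖ ≤
      (1 - (1 - α) * a n) * ‖xs n - z‖ + (1 - α) * a n * K + ‖e n‖ := by
    intro n
    have hJz := hA.resolvent_eq_of_zero_mem (hlam n) (hJ _ (hlam n)) hz
    -- the same step taken from `z` (with no error term) lands at `z + a n • (f z - z)`
    have hstep := norm_convex_step_sub_le (a := a n) (h := Jr (lam n)) hf
      (hA.norm_resolvent_sub_le (hlam n) (hJ _ (hlam n))) (ha n) (xs n) z 0 (e n)
    rw [← hxs, sub_self, abs_zero, zero_mul, hJz, sub_self, norm_zero] at hstep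
    have hz_step : ‖a n • f z + (1 - a n) • z + 0 - z‖ = a n * ‖f z - z‖ := by
      rw [show a n • f z + (1 - a n) • z + 0 - z = a n • (f z - z) by module,
        norm_smul_of_nonneg (ha n).1]
    have hK : (1 - α) * a n * K = a n * ‖f z - z‖ := by
      simp only [K]; field_simp [(sub_pos.2 hα1).ne']
    linarith [norm_sub_le_norm_sub_add_norm_sub (xs (n + 1)) (a n • f z + (1 - a n) • z + 0) z]
  have hb : ∀ n, (1 - α) * a n ∈ Set.Icc (0 : ℝ) 1 := fun n =>
    ⟨mul_nonneg (by linarith) (ha n).1, by nlinarith [(ha n).1, (ha n).2]⟩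
  refine ⟨max ‖xs 0 - z‖ K + ∑' n, ‖e n‖, fun n => ?_⟩
  refine (le_max_add_sum_of_le_one_sub_mul_add (r := fun n => ‖xs n - z‖)
    (d := fun n => ‖e n‖) hb (fun n => norm_nonneg _) hrec n).trans ?_
  gcongr
  exact he.sum_le_tsum _ fun i _ => norm_nonneg _

lemma summable_abs_one_sub_div_of_summable_abs_sub (hlam : ∀ n, 0 < lam n)
    (hinf : 0 < ⨅ n, lam n) (h : Summable fun n => |lam n - lam (n + 1)|) :
    Summable fun n => |1 - lam (n + 1) / lam n| := by
  have hbdd : BddBelow (Set.range lam) := ⟨0, by rintro _ ⟨n, rfl⟩; exact (hlam n).le⟩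
  refine (h.div_const (⨅ n, lam n)).of_nonneg_of_le (fun n => abs_nonneg _) fun n => ?_
  rw [one_sub_div (hlam n).ne', abs_div, abs_of_pos (hlam n)]
  exact div_le_div_of_nonneg_left (abs_nonneg _) hinf (ciInf_le hbdd n)

lemma summable_norm_resolvent_succ_sub (hA : IsAccretive A)
    (hJ : ∀ γ, 0 < γ → IsResolvent A γ (Jr γ)) (hlam : ∀ n, 0 < lam n) {y : ℕ → X} {R : ℝ}
    (hR : ∀ n γ, 0 < γ → ‖y n - Jr γ (y n)‖ ≤ R)
    (hlamcase : Summable (fun n => |1 - lam (n + 1) / lam n|) ∨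
      Summable (fun n => |1 - lam n / lam (n + 1)|) ∨
      (0 < ⨅ n, lam n ∧ Summable (fun n => |lam n - lam (n + 1)|))) :
    Summable fun n => ‖Jr (lam (n + 1)) (y n) - Jr (lam n) (y n)‖ := by
  have hJJ (m k n : ℕ) : ‖Jr (lam m) (y n) - Jr (lam k) (y n)‖ ≤ |1 - lam k / lam m| * R :=
    (hA.norm_resolvent_sub_resolvent_le (hlam k) (hJ _ (hlam m)) (hJ _ (hlam k)) (y n)).trans
      (mul_le_mul_of_nonneg_left (hR n _ (hlam m)) (abs_nonneg _))
  rcases hlamcase with h | h | ⟨hinf, h⟩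
  · exact (h.mul_right R).of_nonneg_of_le (fun n => norm_nonneg _) fun n => by
      rw [norm_sub_rev]; exact hJJ n (n + 1) n
  · exact (h.mul_right R).of_nonneg_of_le (fun n => norm_nonneg _) fun n => hJJ (n + 1) n n
  · exact ((summable_abs_one_sub_div_of_summable_abs_sub hlam hinf h).mul_right R).of_nonneg_of_le
      (fun n => norm_nonneg _) fun n => by rw [norm_sub_rev]; exact hJJ n (n + 1) n

lemma norm_vame_succ_sub_le (hA : IsAccretive A) (hJ : ∀ γ, 0 < γ → IsResolvent A γ (Jr γ))
    (hf : ∀ x y, ‖f x - f y‖ ≤ α * ‖x - y‖) (ha : ∀ n, a n ∈ Set.Icc (0 : ℝ) 1)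
    (hlam : ∀ n, 0 < lam n)
    (hxs : ∀ n, xs (n + 1) = a n • f (xs n) + (1 - a n) • Jr (lam n) (xs n) + e n)
    {C : ℝ} (hC : ∀ n, ‖f (xs n) - Jr (lam n) (xs n)‖ ≤ C) (n : ℕ) :
    ‖xs (n + 2) - xs (n + 1)‖ ≤ (1 - (1 - α) * a (n + 1)) * ‖xs (n + 1) - xs n‖ +
      (|a n - a (n + 1)| * C + ‖Jr (lam (n + 1)) (xs n) - Jr (lam n) (xs n)‖ +
        ‖e (n + 1)‖ + ‖e n‖) := by
  have hstep := norm_convex_step_sub_le (a := a n) (h := Jr (lam n)) hf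
    (hA.norm_resolvent_sub_le (hlam (n + 1)) (hJ _ (hlam (n + 1)))) (ha (n + 1))
    (xs (n + 1)) (xs n) (e n) (e (n + 1))
  rw [← hxs, ← hxs] at hstep
  linarith [mul_le_mul_of_nonneg_left (hC n) (abs_nonneg (a n - a (n + 1)))]

end VAMe

end Accretive

theorem stmt_13_general {X : Type*} [NormedAddCommGroup X] [NormedSpace ℝ X]
    (A : X → Set X)
    (hA : ∀ x y u v : X, u ∈ A x → v ∈ A y → ∀ γ : ℝ, 0 < γ →
      ‖x - y‖ ≤ ‖x - y + γ • (u - v)‖)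
    (hzer : ∃ z : X, (0 : X) ∈ A z)
    (Jr : ℝ → X → X)
    (hJ : ∀ γ : ℝ, 0 < γ → ∀ x : X, γ⁻¹ • (x - Jr γ x) ∈ A (Jr γ x))
    (α : ℝ) (hα0 : 0 ≤ α) (hα1 : α < 1)
    (f : X → X) (hf : ∀ x y : X, ‖f x - f y‖ ≤ α * ‖x - y‖)
    (x : X)
    (a : ℕ → ℝ) (ha : ∀ n, a n ∈ Set.Icc (0 : ℝ) 1)
    (lam : ℕ → ℝ) (hlam : ∀ n, 0 < lam n)
    (e : ℕ → X)
    (xs : ℕ → X)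
    (hxs : ∀ n : ℕ, xs (n + 1) = a n • f (xs n) + (1 - a n) • Jr (lam n) (xs n) + e n)
    (hadiv : Filter.Tendsto (fun n => ∑ i ∈ Finset.range n, a i) Filter.atTop Filter.atTop)
    (hasum : Summable (fun n => |a n - a (n + 1)|))
    (hesum : Summable (fun n => ‖e n‖))
    (hlamcase :
      Summable (fun n => |1 - lam (n + 1) / lam n|) ∨
      Summable (fun n => |1 - lam n / lam (n + 1)|) ∨
      (0 < ⨅ n, lam n ∧ Summable (fun n => |lam n - lam (n + 1)|))) :
    Filter.Tendsto (fun n => ‖xs n - xs (n + 1)‖) Filter.atTop (nhds 0) := by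
  replace hA : IsAccretive A := hA
  obtain ⟨z, hz⟩ := hzer
  obtain ⟨B, hB⟩ := exists_forall_norm_sub_le_of_vame hA hJ hz hα0 hα1 hf ha hlam hesum hxs
  have hres (n : ℕ) (γ : ℝ) (hγ : 0 < γ) : ‖xs n - Jr γ (xs n)‖ ≤ 2 * B :=
    (hA.norm_sub_resolvent_le hγ (hJ γ hγ) hz _).trans (by linarith [hB n])
  have hB0 : 0 ≤ B := (norm_nonneg _).trans (hB 0)
  have hC (n : ℕ) : ‖f (xs n) - Jr (lam n) (xs n)‖ ≤ α * B + ‖f z - z‖ + 3 * B := by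
    have hfz : ‖f (xs n) - z‖ ≤ α * B + ‖f z - z‖ := by
      linarith [norm_sub_le_norm_sub_add_norm_sub (f (xs n)) (f z) z, hf (xs n) z,
        mul_le_mul_of_nonneg_left (hB n) hα0]
    linarith [norm_sub_le_norm_sub_add_norm_sub (f (xs n)) (xs n) (Jr (lam n) (xs n)),
      norm_sub_le_norm_sub_add_norm_sub (f (xs n)) z (xs n), norm_sub_rev z (xs n), hB n,
      hres n _ (hlam n)]
  have hD := summable_norm_resolvent_succ_sub hA hJ hlam hres hlamcase
  have htd : Tendsto (fun n => ∑ i ∈ range n, (1 - α) * a (i + 1)) atTop atTop := by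
    simp_rw [← mul_sum]
    exact (tendsto_sum_range_succ_atTop hadiv).const_mul_atTop (by linarith)
  refine (tendsto_zero_of_le_one_sub_mul_add (fun n => norm_nonneg _)
    (fun n => mul_nonneg (by linarith) (ha (n + 1)).1)
    (fun n => by nlinarith [(ha (n + 1)).1, (ha (n + 1)).2]) (fun n => by positivity)
    ((((hasum.mul_right _).add hD).add ((summable_nat_add_iff 1).2 hesum)).add hesum) htd
    (norm_vame_succ_sub_le hA hJ hf ha hlam hxs hC)).congr fun n => norm_sub_rev _ _

/-- Qualitative asymptotic regularity of the VAMe iteration. -/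
theorem stmt_13 {X : Type*} [NormedAddCommGroup X] [NormedSpace ℝ X] [CompleteSpace X]
    (A : X → Set X)
    (hA : ∀ x y u v : X, u ∈ A x → v ∈ A y → ∀ γ : ℝ, 0 < γ →
      ‖x - y‖ ≤ ‖x - y + γ • (u - v)‖)
    (hzer : ∃ z : X, (0 : X) ∈ A z)
    (Jr : ℝ → X → X)
    (hJ : ∀ γ : ℝ, 0 < γ → ∀ x : X, γ⁻¹ • (x - Jr γ x) ∈ A (Jr γ x))
    (α : ℝ) (hα0 : 0 ≤ α) (hα1 : α < 1)
    (f : X → X) (hf : ∀ x y : X, ‖f x - f y‖ ≤ α * ‖x - y‖)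
    (x : X)
    (a : ℕ → ℝ) (ha : ∀ n, a n ∈ Set.Icc (0 : ℝ) 1)
    (lam : ℕ → ℝ) (hlam : ∀ n, 0 < lam n)
    (e : ℕ → X)
    (xs : ℕ → X) (hxs0 : xs 0 = x)
    (hxs : ∀ n : ℕ, xs (n + 1) = a n • f (xs n) + (1 - a n) • Jr (lam n) (xs n) + e n)
    (hadiv : Filter.Tendsto (fun n => ∑ i ∈ Finset.range n, a i) Filter.atTop Filter.atTop)
    (hasum : Summable (fun n => |a n - a (n + 1)|))
    (hesum : Summable (fun n => ‖e n‖))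
    (hlamcase :
      Summable (fun n => |1 - lam (n + 1) / lam n|) ∨
      Summable (fun n => |1 - lam n / lam (n + 1)|) ∨
      (0 < ⨅ n, lam n ∧ Summable (fun n => |lam n - lam (n + 1)|))) :
    Filter.Tendsto (fun n => ‖xs n - xs (n + 1)‖) Filter.atTop (nhds 0) :=
  stmt_13_general A hA hzer Jr hJ α hα0 hα1 f hf x a ha lam hlam e xs hxs hadiv hasum hesum hlamcase
end
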